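/- Let H₀ ≥ γ be self-adjoint on L²(X,m), V₊ : X → [0,∞] measurable, and V₋ : X → [0,∞) measurable with V₋ form small with respect to H₀ + V₊ with constants q < 1 and C_q (i.e., ∫V₋|u|² ≤ q·((h₀+V₊)[u]) + C_q‖u‖²). Let H = H₀ + V₊ − V₋ be defined via KLMN. If for some s ∈ ℝ the multiplication operator 𝟙_{{V₊ < s}} is (H₀+V₊)-relatively compact, then σ_ess(H) ⊂ [(1−q)(γ+s) − C_q, ∞). -/

import Mathlib

open MeasureTheory Set Filter Topology

noncomputable section

/-- The bounded Borel functional calculus of a self-adjoint operator on a complex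
Hilbert space `ℋ`, encoded axiomatically: a star-algebra homomorphism from bounded
Borel functions on `ℝ` (only their values on the spectrum matter) into the bounded
operators, with the sup-norm bound and strong σ-continuity. This data is equivalent
to the projection-valued spectral measure of a self-adjoint operator with the given
spectrum. -/
structure SelfAdjointCalculus (ℋ : Type) [NormedAddCommGroup ℋ]
    [InnerProductSpace ℂ ℋ] [CompleteSpace ℋ] where
  spectrum : Set ℝ
  spectrum_nonempty : spectrum.Nonempty
  spectrum_closed : IsClosed spectrum
  fc : (ℝ → ℂ) → (ℋ →L[ℂ] ℋ)
  fc_one : fc (fun _ => 1) = ContinuousLinearMap.id ℂ ℋ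
  fc_add : ∀ f g, fc (f + g) = fc f + fc g
  fc_smul : ∀ (c : ℂ) (f), fc (c • f) = c • fc f
  fc_mul : ∀ f g, fc (f * g) = (fc f).comp (fc g)
  fc_star : ∀ f, fc (fun t => starRingEnd ℂ (f t)) = ContinuousLinearMap.adjoint (fc f)
  fc_norm : ∀ (f) (C : ℝ), (∀ t ∈ spectrum, ‖f t‖ ≤ C) → ‖fc f‖ ≤ C
  fc_eqOn : ∀ f g, Set.EqOn f g spectrum → fc f = fc g
  fc_tendsto : ∀ (f : ℕ → ℝ → ℂ) (g : ℝ → ℂ) (C : ℝ),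
    (∀ n t, ‖f n t‖ ≤ C) →
    (∀ t ∈ spectrum, Filter.Tendsto (fun n => f n t) Filter.atTop (nhds (g t))) →
    ∀ x : ℋ, Filter.Tendsto (fun n => fc (f n) x) Filter.atTop (nhds (fc g x))
  fc_proj_infinite : ∀ l ∈ spectrum, ∀ ε > 0,
    fc (Set.indicator {t | dist t l < ε} (fun _ => 1)) ≠ 0

namespace SelfAdjointCalculus

variable {ℋ : Type} [NormedAddCommGroup ℋ] [InnerProductSpace ℂ ℋ] [CompleteSpace ℋ]

/-- The spectral projection `𝟙_I(H)`. -/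
def proj (Φ : SelfAdjointCalculus ℋ) (I : Set ℝ) : ℋ →L[ℂ] ℋ :=
  Φ.fc (I.indicator (fun _ => 1))

/-- `B` is `H`-relatively compact: `B ∘ 𝟙_I(H)` is compact for every bounded Borel set
`I ⊆ ℝ`. -/
def RelCompactWrt (B : ℋ →L[ℂ] ℋ) (Φ : SelfAdjointCalculus ℋ) : Prop :=
  ∀ I : Set ℝ, MeasurableSet I → Bornology.IsBounded I →
    IsCompactOperator (B.comp (Φ.proj I))

/-- The semigroup `e^{-tH}` given by the functional calculus. -/
def heat (Φ : SelfAdjointCalculus ℋ) (t : ℝ) : ℋ →L[ℂ] ℋ :=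
  Φ.fc (fun x => Complex.exp (-(t * x)))

/-- The resolvent `(H - λ)⁻¹` given by the functional calculus. -/
def resolvent (Φ : SelfAdjointCalculus ℋ) (l : ℂ) : ℋ →L[ℂ] ℋ :=
  Φ.fc (fun t => ((t : ℂ) - l)⁻¹)

/-- The resolvent set of the self-adjoint operator: complex numbers away from the
(real) spectrum. -/
def resolventSet (Φ : SelfAdjointCalculus ℋ) : Set ℂ :=
  {l : ℂ | ∀ t ∈ Φ.spectrum, (t : ℂ) ≠ l}

/-- Truncated quadratic form `(min(H,n) u | u)`, an approximation of `h[u]`. -/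
def formApprox (Φ : SelfAdjointCalculus ℋ) (n : ℕ) (u : ℋ) : ℝ :=
  (inner ℂ (Φ.fc (fun t => ((min t (n : ℝ) : ℝ) : ℂ)) u) u : ℂ).re

/-- `u` belongs to the form domain `Q(H)` of a semibounded operator: the truncated
quadratic forms stay bounded. -/
def InFormDomain (Φ : SelfAdjointCalculus ℋ) (u : ℋ) : Prop :=
  BddAbove (Set.range fun n => Φ.formApprox n u)

/-- The quadratic form `h[u] = (Hu|u)` (extended to the form domain). -/
def quadForm (Φ : SelfAdjointCalculus ℋ) (u : ℋ) : ℝ :=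
  ⨆ n, Φ.formApprox n u

/-- The essential spectrum: points around which every spectral projection has
infinite-dimensional range. -/
def essSpectrum (Φ : SelfAdjointCalculus ℋ) : Set ℝ :=
  {l : ℝ | ∀ ε > 0, ¬ FiniteDimensional ℂ
    (LinearMap.range ((Φ.proj (Set.Ioo (l - ε) (l + ε))) : ℋ →ₗ[ℂ] ℋ))}

end SelfAdjointCalculus

open ENNReal

/-- Multiplication by the indicator function of a measurable set `E`, as a bounded
operator on `L²(X, μ)`. -/
def indicatorCLM {X : Type} [MeasurableSpace X] (μ : Measure X) (E : Set X)
    (hE : MeasurableSet E) : Lp ℂ 2 μ →L[ℂ] Lp ℂ 2 μ :=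
  LinearMap.mkContinuous
    { toFun := fun u => (MemLp.indicator hE (Lp.memLp u)).toLp (E.indicator u)
      map_add' := fun u v => by
        apply Lp.ext
        filter_upwards [MemLp.coeFn_toLp (E := ℂ) (MemLp.indicator hE (Lp.memLp (u + v))),
          MemLp.coeFn_toLp (E := ℂ) (MemLp.indicator hE (Lp.memLp u)),
          MemLp.coeFn_toLp (E := ℂ) (MemLp.indicator hE (Lp.memLp v)),
          Lp.coeFn_add ((MemLp.indicator hE (Lp.memLp u)).toLp _)
            ((MemLp.indicator hE (Lp.memLp v)).toLp _),
          Lp.coeFn_add u v] with x hx1 hx2 hx3 hx4 hx5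
        rw [hx4, hx1, Pi.add_apply, hx2, hx3]
        simp only [Set.indicator]
        split_ifs with h
        · exact hx5
        · simp
      map_smul' := fun c u => by
        apply Lp.ext
        filter_upwards [MemLp.coeFn_toLp (E := ℂ) (MemLp.indicator hE (Lp.memLp (c • u))),
          MemLp.coeFn_toLp (E := ℂ) (MemLp.indicator hE (Lp.memLp u)),
          Lp.coeFn_smul c ((MemLp.indicator hE (Lp.memLp u)).toLp _),
          Lp.coeFn_smul c u] with x hx1 hx2 hx3 hx4
        simp only [RingHom.id_apply]
        rw [hx3, hx1, Pi.smul_apply, hx2]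
        simp only [Set.indicator]
        split_ifs with h
        · exact hx4
        · simp }
    1
    (fun u => by
      simp only [LinearMap.coe_mk, AddHom.coe_mk, one_mul]
      rw [Lp.norm_toLp, Lp.norm_def]
      exact ENNReal.toReal_mono (Lp.eLpNorm_ne_top u) (eLpNorm_indicator_le (ε := ℂ) _))

/-- A Hilbert–Schmidt operator: `∑ ‖T e_i‖² < ∞` for (every) Hilbert basis. -/
def IsHilbertSchmidt {ℋ : Type} [NormedAddCommGroup ℋ] [InnerProductSpace ℂ ℋ]
    [CompleteSpace ℋ] (T : ℋ →L[ℂ] ℋ) : Prop :=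
  ∀ (ι : Type) (b : HilbertBasis ι ℂ ℋ), Summable (fun i => ‖T (b i)‖ ^ 2)

/-!
Suppose `l < (1 - q)(γ + s) - C_q` lay in `σ_ess(H)`. The spectral subspaces of `H` near `l`
are infinite-dimensional, so they contain an orthonormal sequence `u_k` with `h[u_k] ≤ b` for
some `b < (1 - q)(γ + s) - C_q`. Form smallness of `V₋` turns this into
`(h₀ + V₊)[u_k] ≤ M < γ + s`, hence `∫ V₊ |u_k|² ≤ M - γ < s`, and by Markov's inequality
`‖𝟙_{V₊ < s} u_k‖ ≥ 1 - √((M - γ) / s) > 0`. On the other hand, split `u_k` spectrally for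
`H₀ + V₊` at a large energy `n`: the part above `n` is uniformly small by Chebyshev's
inequality, and `𝟙_{V₊ < s} 𝟙_{[γ, n)}(H₀ + V₊)` is compact, so it sends the weakly null
sequence `u_k` to zero. Hence `𝟙_{V₊ < s} u_k → 0`, a contradiction.
-/

section HilbertSpace

variable {𝕜 E F : Type*} [RCLike 𝕜] [NormedAddCommGroup E] [InnerProductSpace 𝕜 E]
  [NormedAddCommGroup F] [InnerProductSpace 𝕜 F]

theorem Orthonormal.tendsto_inner_left {u : ℕ → E} (hu : Orthonormal 𝕜 u) (x : E) :
    Tendsto (fun k => inner 𝕜 (u k) x) atTop (𝓝 0) := by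
  have hsq := (hu.inner_products_summable x).tendsto_atTop_zero
  rw [tendsto_zero_iff_norm_tendsto_zero]
  simpa using (hsq.sqrt).congr fun k => Real.sqrt_sq (norm_nonneg _)

theorem IsCompactOperator.tendsto_apply_orthonormal [CompleteSpace E] [CompleteSpace F]
    {K : E →L[𝕜] F} (hK : IsCompactOperator K) {u : ℕ → E} (hu : Orthonormal 𝕜 u) :
    Tendsto (fun k => K (u k)) atTop (𝓝 0) := by
  refine (hK.isCompact_closure_image_closedBall 1).tendsto_nhds_of_unique_mapClusterPt
    (Eventually.of_forall fun k => subset_closure ⟨u k, by simp [hu.1 k], rfl⟩) ?_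
  intro a _ ha
  have hweak : Tendsto (fun k => inner 𝕜 (K (u k)) a) atTop (𝓝 0) := by
    simpa only [ContinuousLinearMap.adjoint_inner_right] using
      hu.tendsto_inner_left (ContinuousLinearMap.adjoint K a)
  have hcluster : MapClusterPt (inner 𝕜 a a) atTop (fun k => inner 𝕜 (K (u k)) a) :=
    ha.continuousAt_comp (f := fun z => inner 𝕜 z a) (by fun_prop)
  exact inner_self_eq_zero.1 (eq_of_nhds_neBot (ClusterPt.mono hcluster hweak))

theorem Submodule.exists_orthonormal_of_not_finiteDimensional (R : Submodule 𝕜 E)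
    (hR : ¬ FiniteDimensional 𝕜 R) : ∃ u : ℕ → E, Orthonormal 𝕜 u ∧ ∀ k, u k ∈ R := by
  let b := Module.Basis.ofVectorSpace 𝕜 R
  have : Infinite (Module.Basis.ofVectorSpaceIndex 𝕜 R) := by
    by_contra hfin
    rw [not_infinite_iff_finite] at hfin
    have := Fintype.ofFinite (Module.Basis.ofVectorSpaceIndex 𝕜 R)
    exact hR (Module.Finite.of_basis b)
  have hli : LinearIndependent 𝕜 (b ∘ Infinite.natEmbedding _) :=
    b.linearIndependent.comp _ (Infinite.natEmbedding _).injective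
  refine ⟨fun k => (InnerProductSpace.gramSchmidtNormed 𝕜 (b ∘ Infinite.natEmbedding _) k : R),
    ?_, fun k => Subtype.mem _⟩
  exact (InnerProductSpace.gramSchmidtNormed_orthonormal hli).comp_linearIsometry R.subtypeₗᵢ

end HilbertSpace

namespace SelfAdjointCalculus

variable {ℋ : Type} [NormedAddCommGroup ℋ] [InnerProductSpace ℂ ℋ] [CompleteSpace ℋ]
  (Φ : SelfAdjointCalculus ℋ)

theorem fc_sub (f g : ℝ → ℂ) : Φ.fc (f - g) = Φ.fc f - Φ.fc g := by
  rw [sub_eq_add_neg, ← neg_one_smul ℂ g, Φ.fc_add, Φ.fc_smul, neg_one_smul, sub_eq_add_neg]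

theorem adjoint_fc_ofReal (f : ℝ → ℝ) :
    ContinuousLinearMap.adjoint (Φ.fc fun t => (f t : ℂ)) = Φ.fc fun t => (f t : ℂ) := by
  simp_rw [← Φ.fc_star, Complex.conj_ofReal]

theorem re_inner_fc_nonneg {f : ℝ → ℝ} (hf : ∀ t ∈ Φ.spectrum, 0 ≤ f t) (u : ℋ) :
    0 ≤ (inner ℂ (Φ.fc (fun t => (f t : ℂ)) u) u).re := by
  have hsqrt : Φ.fc (fun t => (f t : ℂ)) =
      (Φ.fc fun t => (√(f t) : ℂ)) ∘L (Φ.fc fun t => (√(f t) : ℂ)) := by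
    rw [← Φ.fc_mul]
    refine Φ.fc_eqOn _ _ fun t ht => ?_
    simp [← Complex.ofReal_mul, Real.mul_self_sqrt (hf t ht)]
  rw [hsqrt, ContinuousLinearMap.comp_apply, ← ContinuousLinearMap.adjoint_inner_right,
    adjoint_fc_ofReal]
  exact inner_self_nonneg (𝕜 := ℂ)

theorem re_inner_fc_mono {f g : ℝ → ℝ} (hfg : ∀ t ∈ Φ.spectrum, f t ≤ g t) (u : ℋ) :
    (inner ℂ (Φ.fc (fun t => (f t : ℂ)) u) u).re ≤
      (inner ℂ (Φ.fc (fun t => (g t : ℂ)) u) u).re := by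
  have h := Φ.re_inner_fc_nonneg (f := g - f) (fun t ht => sub_nonneg.2 (hfg t ht)) u
  have hsub : (fun t => ((g - f) t : ℂ)) = (fun t => (g t : ℂ)) - fun t => (f t : ℂ) := by
    ext t; simp
  rw [hsub, Φ.fc_sub, sub_apply, inner_sub_left, Complex.sub_re] at h
  linarith

theorem proj_eq_fc_ofReal (I : Set ℝ) :
    Φ.proj I = Φ.fc fun t => ((I.indicator (fun _ => 1) t : ℝ) : ℂ) := by
  rw [proj]
  congr 1
  ext t
  by_cases ht : t ∈ I <;> simp [ht]

theorem proj_proj (I : Set ℝ) (u : ℋ) : Φ.proj I (Φ.proj I u) = Φ.proj I u := by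
  rw [← ContinuousLinearMap.comp_apply, proj, ← Φ.fc_mul]
  congr 2
  ext t
  by_cases ht : t ∈ I <;> simp [ht]

theorem adjoint_proj (I : Set ℝ) : ContinuousLinearMap.adjoint (Φ.proj I) = Φ.proj I := by
  rw [proj_eq_fc_ofReal, adjoint_fc_ofReal]

theorem re_inner_proj_self (I : Set ℝ) (u : ℋ) :
    (inner ℂ (Φ.proj I u) u).re = ‖Φ.proj I u‖ ^ 2 := by
  rw [← Φ.proj_proj I u, ← ContinuousLinearMap.adjoint_inner_right, adjoint_proj, proj_proj,
    inner_self_eq_norm_sq_to_K]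
  norm_cast

theorem re_inner_fc_affine_indicator (a c : ℝ) (I : Set ℝ) (u : ℋ) :
    (inner ℂ (Φ.fc (fun t => ((a + c * I.indicator (fun _ => 1) t : ℝ) : ℂ)) u) u).re =
      a * ‖u‖ ^ 2 + c * ‖Φ.proj I u‖ ^ 2 := by
  have hfc : Φ.fc (fun t => ((a + c * I.indicator (fun _ => 1) t : ℝ) : ℂ)) =
      (a : ℂ) • ContinuousLinearMap.id ℂ ℋ + (c : ℂ) • Φ.proj I := by
    rw [proj_eq_fc_ofReal, ← Φ.fc_one, ← Φ.fc_smul, ← Φ.fc_smul, ← Φ.fc_add]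
    congr 1
    ext t
    simp
  rw [hfc, ← re_inner_proj_self]
  simp [inner_self_eq_norm_sq_to_K, ← Complex.ofReal_pow]

theorem re_inner_fc_le_quadForm {f : ℝ → ℝ} {n : ℕ} (hf : ∀ t ∈ Φ.spectrum, f t ≤ min t n)
    {u : ℋ} (hu : Φ.InFormDomain u) :
    (inner ℂ (Φ.fc (fun t => (f t : ℂ)) u) u).re ≤ Φ.quadForm u :=
  (Φ.re_inner_fc_mono hf u).trans (le_ciSup hu n)

theorem quadForm_le_of_proj_eq {I : Set ℝ} {b : ℝ} (hb : ∀ t ∈ I ∩ Φ.spectrum, t ≤ b) {u : ℋ}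
    (hu : Φ.proj I u = u) : Φ.InFormDomain u ∧ Φ.quadForm u ≤ b * ‖u‖ ^ 2 := by
  have happrox : ∀ n : ℕ, Φ.formApprox n u ≤ b * ‖u‖ ^ 2 := by
    intro n
    -- the `0 + _` form is the one evaluated by `re_inner_fc_affine_indicator`
    have hcut : Φ.fc (fun t => ((min t n : ℝ) : ℂ)) ∘L Φ.proj I =
        Φ.fc fun t => ((0 + min t n * I.indicator (fun _ => 1) t : ℝ) : ℂ) := by
      rw [proj_eq_fc_ofReal, ← Φ.fc_mul]
      congr 1
      ext t
      simp
    calc Φ.formApprox n u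
        = (inner ℂ (Φ.fc (fun t => ((0 + min t n * I.indicator (fun _ => 1) t : ℝ) : ℂ)) u)
            u).re := by
          rw [formApprox, ← hcut, ContinuousLinearMap.comp_apply, hu]
      _ ≤ (inner ℂ (Φ.fc (fun t => ((0 + b * I.indicator (fun _ => 1) t : ℝ) : ℂ)) u) u).re := by
          refine Φ.re_inner_fc_mono (fun t ht => ?_) u
          by_cases htI : t ∈ I
          · simpa [htI] using (min_le_left _ _).trans (hb t ⟨htI, ht⟩)
          · simp [htI]
      _ = b * ‖u‖ ^ 2 := by rw [re_inner_fc_affine_indicator, hu]; ring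
  have hdom : Φ.InFormDomain u := ⟨_, Set.forall_mem_range.2 happrox⟩
  exact ⟨hdom, ciSup_le happrox⟩

theorem sq_norm_proj_Ici_le {γ : ℝ} (hγ : Φ.spectrum ⊆ Set.Ici γ) {n : ℝ} (hn : γ ≤ n) {u : ℋ}
    (hu : Φ.InFormDomain u) :
    (n - γ) * ‖Φ.proj (Set.Ici n) u‖ ^ 2 ≤ Φ.quadForm u - γ * ‖u‖ ^ 2 := by
  obtain ⟨m, hm⟩ := exists_nat_ge n
  have h := Φ.re_inner_fc_le_quadForm
    (f := fun t => γ + (n - γ) * (Set.Ici n).indicator (fun _ => 1) t) (n := m) ?_ hu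
  · rw [re_inner_fc_affine_indicator] at h
    linarith
  intro t ht
  by_cases htn : n ≤ t
  · simpa [htn] using hm
  · simpa [htn] using ⟨hγ ht, hn.trans hm⟩

theorem le_quadForm_of_spectrum_subset {γ : ℝ} (hγ : Φ.spectrum ⊆ Set.Ici γ) {u : ℋ}
    (hu : Φ.InFormDomain u) : γ * ‖u‖ ^ 2 ≤ Φ.quadForm u := by
  have h := Φ.sq_norm_proj_Ici_le hγ le_rfl hu
  rw [sub_self, zero_mul] at h
  linarith

theorem proj_Ico_add_proj_Ici {γ : ℝ} (hγ : Φ.spectrum ⊆ Set.Ici γ) (n : ℝ)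
    (u : ℋ) : Φ.proj (Set.Ico γ n) u + Φ.proj (Set.Ici n) u = u := by
  have h : Φ.proj (Set.Ico γ n) + Φ.proj (Set.Ici n) = Φ.fc fun _ => 1 := by
    rw [proj, proj, ← Φ.fc_add]
    refine Φ.fc_eqOn _ _ fun t ht => ?_
    by_cases htn : n ≤ t
    · simp [htn, not_lt.2 htn]
    · simp [htn, not_le.1 htn, Set.mem_Ici.1 (hγ ht)]
  simpa [Φ.fc_one] using congrArg (· u) h

theorem spectrum_subset_Ici_of_le_quadForm {γ : ℝ}
    (h : ∀ u, Φ.InFormDomain u → γ * ‖u‖ ^ 2 ≤ Φ.quadForm u) : Φ.spectrum ⊆ Set.Ici γ := by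
  intro t ht
  by_contra hlt
  rw [Set.mem_Ici, not_le] at hlt
  set δ := (γ - t) / 2
  obtain ⟨v, hv⟩ : ∃ v, Φ.proj (Metric.ball t δ) v ≠ 0 := by
    by_contra! hzero
    exact Φ.fc_proj_infinite t ht δ (by simp [δ, hlt]) (ContinuousLinearMap.ext hzero)
  set w := Φ.proj (Metric.ball t δ) v
  obtain ⟨hdom, hle⟩ := Φ.quadForm_le_of_proj_eq (I := Metric.ball t δ) (b := t + δ)
    (fun s hs => (Real.ball_eq_Ioo t δ ▸ hs.1).2.le) (Φ.proj_proj _ v)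
  have hw : 0 < ‖w‖ ^ 2 := by positivity
  have hgap : t + δ < γ := by simp only [δ]; linarith
  nlinarith [h w hdom, mul_pos (sub_pos.2 hgap) hw]

theorem exists_orthonormal_of_mem_essSpectrum {l b : ℝ} (hl : l ∈ Φ.essSpectrum) (hlb : l < b) :
    ∃ u : ℕ → ℋ, Orthonormal ℂ u ∧ ∀ k, Φ.InFormDomain (u k) ∧ Φ.quadForm (u k) ≤ b := by
  obtain ⟨u, hu, hmem⟩ :=
    Submodule.exists_orthonormal_of_not_finiteDimensional _ (hl (b - l) (sub_pos.2 hlb))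
  refine ⟨u, hu, fun k => ?_⟩
  obtain ⟨v, hv⟩ := LinearMap.mem_range.1 (hmem k)
  have hfix : Φ.proj (Set.Ioo (l - (b - l)) (l + (b - l))) (u k) = u k := by
    rw [← hv]
    exact Φ.proj_proj _ v
  simpa [hu.1 k] using Φ.quadForm_le_of_proj_eq (fun t ht => ht.1.2.le) hfix

theorem exists_forall_norm_proj_Ici_lt {γ : ℝ} (hγ : Φ.spectrum ⊆ Set.Ici γ) (M : ℝ) {η : ℝ}
    (hη : 0 < η) : ∃ n, ∀ u, Φ.InFormDomain u → ‖u‖ = 1 → Φ.quadForm u ≤ M →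
      ‖Φ.proj (Set.Ici n) u‖ < η := by
  set n := γ + (|M - γ| + 1) / η ^ 2
  have hnη : (n - γ) * η ^ 2 = |M - γ| + 1 := by
    simp only [n, add_sub_cancel_left]
    field_simp
  have hγn : γ ≤ n := le_add_of_nonneg_right (by positivity)
  refine ⟨n, fun u hdom hnorm hM => ?_⟩
  have hcheb := Φ.sq_norm_proj_Ici_le hγ hγn hdom
  rw [hnorm, one_pow, mul_one] at hcheb
  by_contra! hge
  have : (n - γ) * η ^ 2 ≤ (n - γ) * ‖Φ.proj (Set.Ici n) u‖ ^ 2 := by gcongr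
  linarith [le_abs_self (M - γ)]

theorem tendsto_apply_orthonormal_of_relCompactWrt {B : ℋ →L[ℂ] ℋ} (hB : RelCompactWrt B Φ)
    {γ : ℝ} (hγ : Φ.spectrum ⊆ Set.Ici γ) {u : ℕ → ℋ} (hu : Orthonormal ℂ u) {M : ℝ}
    (hM : ∀ k, Φ.InFormDomain (u k) ∧ Φ.quadForm (u k) ≤ M) :
    Tendsto (fun k => B (u k)) atTop (𝓝 0) := by
  rw [Metric.tendsto_atTop]
  intro δ hδ
  set η := δ / (2 * (‖B‖ + 1))
  obtain ⟨n, htail⟩ := Φ.exists_forall_norm_proj_Ici_lt hγ M (η := η) (by positivity)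
  have hlow := (hB _ measurableSet_Ico (Metric.isBounded_Ico γ n)).tendsto_apply_orthonormal hu
  obtain ⟨N, hN⟩ := Metric.tendsto_atTop.1 hlow (δ / 2) (by positivity)
  refine ⟨N, fun k hk => ?_⟩
  rw [dist_zero_right, ← Φ.proj_Ico_add_proj_Ici hγ n (u k), map_add]
  have hhigh : ‖B (Φ.proj (Set.Ici n) (u k))‖ < δ / 2 := by
    calc ‖B (Φ.proj (Set.Ici n) (u k))‖
        ≤ ‖B‖ * ‖Φ.proj (Set.Ici n) (u k)‖ := B.le_opNorm _
      _ ≤ ‖B‖ * η := by gcongr; exact (htail _ (hM k).1 (hu.1 k) (hM k).2).le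
      _ < (‖B‖ + 1) * η := by gcongr; linarith
      _ = δ / 2 := by simp only [η]; field_simp
  calc ‖B (Φ.proj (Set.Ico γ n) (u k)) + B (Φ.proj (Set.Ici n) (u k))‖
      ≤ ‖B (Φ.proj (Set.Ico γ n) (u k))‖ + ‖B (Φ.proj (Set.Ici n) (u k))‖ := norm_add_le _ _
    _ < δ := by
      have := hN k hk
      rw [dist_zero_right] at this
      exact (add_lt_add this hhigh).trans_eq (add_halves δ)

end SelfAdjointCalculus

section IndicatorOperator

variable {X : Type} [MeasurableSpace X] {μ : Measure X}

theorem MeasureTheory.Lp.sq_norm_eq_lintegral {F : Type*} [NormedAddCommGroup F] (v : Lp F 2 μ) :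
    ‖v‖ ^ 2 = (∫⁻ x, (‖v x‖₊ : ℝ≥0∞) ^ 2 ∂μ).toReal := by
  have h := eLpNorm_nnreal_pow_eq_lintegral (μ := μ) (f := v) (p := 2) two_ne_zero
  simp only [NNReal.coe_ofNat, ENNReal.coe_ofNat, ENNReal.rpow_ofNat, enorm_eq_nnnorm] at h
  rw [Lp.norm_def, ← ENNReal.toReal_pow, h]

theorem indicatorCLM_ae_eq (E : Set X) (hE : MeasurableSet E) (v : Lp ℂ 2 μ) :
    indicatorCLM μ E hE v =ᵐ[μ] E.indicator v :=
  MemLp.coeFn_toLp (E := ℂ) (MemLp.indicator hE (Lp.memLp v))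

theorem sq_norm_sub_indicatorCLM (E : Set X) (hE : MeasurableSet E) (v : Lp ℂ 2 μ) :
    ‖v - indicatorCLM μ E hE v‖ ^ 2 = (∫⁻ x in Eᶜ, (‖v x‖₊ : ℝ≥0∞) ^ 2 ∂μ).toReal := by
  have hae : ⇑(v - indicatorCLM μ E hE v) =ᵐ[μ] Eᶜ.indicator v := by
    filter_upwards [Lp.coeFn_sub v (indicatorCLM μ E hE v), indicatorCLM_ae_eq E hE v]
      with x hsub hind
    rw [hsub, Pi.sub_apply, hind]
    by_cases hx : x ∈ E <;> simp [hx]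
  rw [Lp.sq_norm_eq_lintegral, ← lintegral_indicator hE.compl]
  congr 1
  refine lintegral_congr_ae (hae.mono fun x hx => ?_)
  dsimp only
  rw [hx]
  by_cases hxE : x ∈ E <;> simp [hxE]

theorem mul_sq_norm_sub_indicatorCLM_le (V : X → ℝ≥0∞) {s : ℝ} (hs : 0 ≤ s)
    (hE : MeasurableSet {x | V x < ENNReal.ofReal s}) (v : Lp ℂ 2 μ)
    (hv : ∫⁻ x, V x * (‖v x‖₊ : ℝ≥0∞) ^ 2 ∂μ ≠ ∞) :
    s * ‖v - indicatorCLM μ {x | V x < ENNReal.ofReal s} hE v‖ ^ 2 ≤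
      (∫⁻ x, V x * (‖v x‖₊ : ℝ≥0∞) ^ 2 ∂μ).toReal := by
  rw [sq_norm_sub_indicatorCLM]
  nth_rw 1 [← ENNReal.toReal_ofReal hs]
  rw [← ENNReal.toReal_mul]
  refine ENNReal.toReal_mono hv ?_
  rw [← lintegral_const_mul' _ _ ENNReal.ofReal_ne_top]
  calc ∫⁻ x in {x | V x < ENNReal.ofReal s}ᶜ, ENNReal.ofReal s * (‖v x‖₊ : ℝ≥0∞) ^ 2 ∂μ
      ≤ ∫⁻ x in {x | V x < ENNReal.ofReal s}ᶜ, V x * (‖v x‖₊ : ℝ≥0∞) ^ 2 ∂μ :=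
        setLIntegral_mono' hE.compl fun x hx => by gcongr; simpa using hx
    _ ≤ ∫⁻ x, V x * (‖v x‖₊ : ℝ≥0∞) ^ 2 ∂μ := setLIntegral_le_lintegral _ _

theorem not_tendsto_indicatorCLM_zero (V : X → ℝ≥0∞) {s C : ℝ} (hCs : C < s)
    (hE : MeasurableSet {x | V x < ENNReal.ofReal s})
    {u : ℕ → Lp ℂ 2 μ} (hu : ∀ k, ‖u k‖ = 1)
    (hV : ∀ k, ∫⁻ x, V x * (‖u k x‖₊ : ℝ≥0∞) ^ 2 ∂μ ≠ ∞ ∧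
      (∫⁻ x, V x * (‖u k x‖₊ : ℝ≥0∞) ^ 2 ∂μ).toReal ≤ C) :
    ¬ Tendsto (fun k => indicatorCLM μ {x | V x < ENNReal.ofReal s} hE (u k)) atTop (𝓝 0) := by
  intro hlim
  have hs : 0 < s := lt_of_le_of_lt (toReal_nonneg.trans (hV 0).2) hCs
  have hθ : √(C / s) < 1 := (Real.sqrt_lt' one_pos).2 (by rw [one_pow, div_lt_one hs]; exact hCs)
  obtain ⟨k, hk⟩ :=
    (hlim.norm.eventually_lt_const (u := 1 - √(C / s)) (by rw [norm_zero]; linarith)).exists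
  have hfar : √(C / s) < ‖u k - indicatorCLM μ _ hE (u k)‖ := by
    linarith [norm_sub_norm_le (u k) (indicatorCLM μ _ hE (u k)), hu k]
  have hmarkov := mul_sq_norm_sub_indicatorCLM_le V hs.le hE (u k) (hV k).1
  linarith [(div_lt_iff₀' hs).1 (Real.lt_sq_of_sqrt_lt hfar), (hV k).2]

end IndicatorOperator

theorem stmt11_general {X : Type} [MeasurableSpace X] (μ : Measure X)
    (Φ₀ ΦP Φ : SelfAdjointCalculus (Lp ℂ 2 μ))
    (γ : ℝ) (hγ : Φ₀.spectrum ⊆ Set.Ici γ)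
    (Vp : X → ℝ≥0∞)
    (Vm : X → ℝ)
    -- `ΦP` is the form sum `H₀ + V₊`:
    (hPdom : ∀ u : Lp ℂ 2 μ, ΦP.InFormDomain u ↔
      (Φ₀.InFormDomain u ∧ ∫⁻ x, Vp x * (‖u x‖₊ : ℝ≥0∞) ^ 2 ∂μ < ∞))
    (hPform : ∀ u : Lp ℂ 2 μ, ΦP.InFormDomain u →
      ΦP.quadForm u = Φ₀.quadForm u + (∫⁻ x, Vp x * (‖u x‖₊ : ℝ≥0∞) ^ 2 ∂μ).toReal)
    -- `V₋` is form small w.r.t. `H₀ + V₊` with constants `q < 1` and `C_q`: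
    (q Cq : ℝ) (hq1 : q < 1)
    (hsmall : ∀ u : Lp ℂ 2 μ, ΦP.InFormDomain u →
      ∫⁻ x, ENNReal.ofReal (Vm x) * (‖u x‖₊ : ℝ≥0∞) ^ 2 ∂μ < ∞ ∧
      (∫⁻ x, ENNReal.ofReal (Vm x) * (‖u x‖₊ : ℝ≥0∞) ^ 2 ∂μ).toReal
        ≤ q * ΦP.quadForm u + Cq * ‖u‖ ^ 2)
    -- `Φ` is `H = H₀ + V₊ - V₋`, defined via the KLMN theorem:
    (hdom : ∀ u, Φ.InFormDomain u ↔ ΦP.InFormDomain u)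
    (hform : ∀ u, ΦP.InFormDomain u → Φ.quadForm u = ΦP.quadForm u -
      (∫⁻ x, ENNReal.ofReal (Vm x) * (‖u x‖₊ : ℝ≥0∞) ^ 2 ∂μ).toReal)
    (s : ℝ)
    (hE : MeasurableSet {x | Vp x < ENNReal.ofReal s})
    (hrel : SelfAdjointCalculus.RelCompactWrt
      (indicatorCLM μ {x | Vp x < ENNReal.ofReal s} hE) ΦP) :
    Φ.essSpectrum ⊆ Set.Ici ((1 - q) * (γ + s) - Cq) := by
  intro l hl
  by_contra hlt
  rw [Set.mem_Ici, not_le] at hlt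
  obtain ⟨b, hlb, hbc⟩ := exists_between hlt
  obtain ⟨u, hu, hHu⟩ := Φ.exists_orthonormal_of_mem_essSpectrum hl hlb
  have hP : ∀ v, ΦP.InFormDomain v →
      γ * ‖v‖ ^ 2 + (∫⁻ x, Vp x * (‖v x‖₊ : ℝ≥0∞) ^ 2 ∂μ).toReal ≤ ΦP.quadForm v := fun v hv =>
    hPform v hv ▸ add_le_add_left (Φ₀.le_quadForm_of_spectrum_subset hγ ((hPdom v).1 hv).1) _
  have hγP : ΦP.spectrum ⊆ Set.Ici γ :=
    ΦP.spectrum_subset_Ici_of_le_quadForm fun v hv =>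
      (le_add_of_nonneg_right toReal_nonneg).trans (hP v hv)
  set M := (b + Cq) / (1 - q)
  have hMs : M < γ + s := by rw [div_lt_iff₀ (by linarith)]; linarith
  -- KLMN: `h ≥ (1 - q) h_P - C_q`
  have hPu : ∀ k, ΦP.InFormDomain (u k) ∧ ΦP.quadForm (u k) ≤ M := by
    intro k
    have hdomk := (hdom (u k)).1 (hHu k).1
    have hsmallk := (hsmall (u k) hdomk).2
    rw [hu.1 k] at hsmallk
    refine ⟨hdomk, (le_div_iff₀ (by linarith)).2 ?_⟩
    linarith [hform (u k) hdomk, (hHu k).2]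
  refine not_tendsto_indicatorCLM_zero Vp (C := M - γ) (by linarith) hE (fun k => hu.1 k)
    (fun k => ⟨((hPdom _).1 (hPu k).1).2.ne, ?_⟩)
    (ΦP.tendsto_apply_orthonormal_of_relCompactWrt hrel hγP hu hPu)
  have := hP (u k) (hPu k).1
  rw [hu.1 k] at this
  linarith [(hPu k).2]

/-- Let `H₀ ≥ γ` be self-adjoint on `L²(X, μ)` (calculus `Φ₀`), `V₊` a
nonnegative (possibly `∞`-valued) measurable potential, `ΦP` the calculus of the form
sum `H₀ + V₊`, `V₋ ≥ 0` form small w.r.t. `H₀ + V₊` with constants `q < 1`, `C_q`, and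
`Φ` the calculus of `H = H₀ + V₊ - V₋` (KLMN). If multiplication by `𝟙_{{V₊ < s}}` is
`(H₀ + V₊)`-relatively compact for some `s`, then
`σ_ess(H) ⊆ [(1 - q)(γ + s) - C_q, ∞)`. -/
theorem stmt11 {X : Type} [MeasurableSpace X] (μ : Measure X) [SigmaFinite μ]
    (Φ₀ ΦP Φ : SelfAdjointCalculus (Lp ℂ 2 μ))
    (γ : ℝ) (hγ : Φ₀.spectrum ⊆ Set.Ici γ)
    (Vp : X → ℝ≥0∞) (hVpmeas : Measurable Vp)
    (Vm : X → ℝ) (hVmmeas : Measurable Vm) (hVm0 : ∀ x, 0 ≤ Vm x)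
    -- `ΦP` is the form sum `H₀ + V₊`:
    (hPdom : ∀ u : Lp ℂ 2 μ, ΦP.InFormDomain u ↔
      (Φ₀.InFormDomain u ∧ ∫⁻ x, Vp x * (‖u x‖₊ : ℝ≥0∞) ^ 2 ∂μ < ∞))
    (hPform : ∀ u : Lp ℂ 2 μ, ΦP.InFormDomain u →
      ΦP.quadForm u = Φ₀.quadForm u + (∫⁻ x, Vp x * (‖u x‖₊ : ℝ≥0∞) ^ 2 ∂μ).toReal)
    -- `V₋` is form small w.r.t. `H₀ + V₊` with constants `q < 1` and `C_q`:
    (q Cq : ℝ) (hq0 : 0 ≤ q) (hq1 : q < 1)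
    (hsmall : ∀ u : Lp ℂ 2 μ, ΦP.InFormDomain u →
      ∫⁻ x, ENNReal.ofReal (Vm x) * (‖u x‖₊ : ℝ≥0∞) ^ 2 ∂μ < ∞ ∧
      (∫⁻ x, ENNReal.ofReal (Vm x) * (‖u x‖₊ : ℝ≥0∞) ^ 2 ∂μ).toReal
        ≤ q * ΦP.quadForm u + Cq * ‖u‖ ^ 2)
    -- `Φ` is `H = H₀ + V₊ - V₋`, defined via the KLMN theorem:
    (hdom : ∀ u, Φ.InFormDomain u ↔ ΦP.InFormDomain u)
    (hform : ∀ u, ΦP.InFormDomain u → Φ.quadForm u = ΦP.quadForm u -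
      (∫⁻ x, ENNReal.ofReal (Vm x) * (‖u x‖₊ : ℝ≥0∞) ^ 2 ∂μ).toReal)
    (s : ℝ)
    (hE : MeasurableSet {x | Vp x < ENNReal.ofReal s})
    (hrel : SelfAdjointCalculus.RelCompactWrt
      (indicatorCLM μ {x | Vp x < ENNReal.ofReal s} hE) ΦP) :
    Φ.essSpectrum ⊆ Set.Ici ((1 - q) * (γ + s) - Cq) :=
  stmt11_general μ Φ₀ ΦP Φ γ hγ Vp Vm hPdom hPform q Cq hq1 hsmall hdom hform s hE hrel
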